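/- arXiv:1907.10386 — 2 statements merged into one kernel-verified Lean document; each statement's English description precedes it below -/
import Mathlib

section
/- Completeness with respect to relations for the signature {∘, 1, D}: for any {∘, 1, D}-terms s and t over variables Σ, if for every set X and every assignment f of binary relations on X to the variables the relational interpretations of s and t under f coincide, then ⟨s⟩ = ⟨t⟩. -/
inductive PreTree (α : Type) : Type
  | node : Bool → List (α × PreTree α) → PreTree α

namespace PreTree

variable {α : Type}

def mark : PreTree α → Bool
  | node b _ => b

def children : PreTree α → List (α × PreTree α)
  | node _ cs => cs

def le : PreTree α → PreTree α → Prop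
  | node b₁ c₁, node b₂ c₂ =>
      (b₂ = true → b₁ = true) ∧
      ∀ q, q ∈ c₂ → ∃ p, p ∈ c₁ ∧ p.1 = q.1 ∧ le p.2 q.2
termination_by _ t₂ => sizeOf t₂
decreasing_by
  have h := List.sizeOf_lt_of_mem ‹q ∈ c₂›
  obtain ⟨qa, qt⟩ := q
  simp at h ⊢
  omega

-- The reduced form of a tree: reduce all child subtrees, then for each
-- label keep only the `≤`-minimal attached subtrees.
open scoped Classical in
noncomputable def reduce : PreTree α → PreTree α
  | node b cs =>
      let cs' : List (α × PreTree α) := cs.attach.map fun p => (p.1.1, reduce p.1.2)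
      node b (cs'.filter fun q =>
        decide (∀ q' ∈ cs', q'.1 = q.1 → le q'.2 q.2 → le q.2 q'.2))
termination_by t => sizeOf t
decreasing_by
  have h := List.sizeOf_lt_of_mem p.2
  obtain ⟨⟨pa, pt⟩, hp⟩ := p
  simp at h ⊢
  omega

/-- A tree is reduced if it equals its reduced form. -/
def Reduced (T : PreTree α) : Prop := reduce T = T

/-- The number of marked (point) vertices of a tree. -/
def markCount : PreTree α → ℕ
  | node b cs => (cond b 1 0) + (cs.attach.map fun p => markCount p.1.2).sum
termination_by t => sizeOf t
decreasing_by
  have h := List.sizeOf_lt_of_mem p.2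
  obtain ⟨⟨pa, pt⟩, hp⟩ := p
  simp at h ⊢
  omega

/-- A pointed tree: exactly one vertex is marked as the point. -/
def Pointed (T : PreTree α) : Prop := markCount T = 1

/-- Remove all point marks. -/
def unmark : PreTree α → PreTree α
  | node _ cs => node false (cs.attach.map fun p => (p.1.1, unmark p.1.2))
termination_by t => sizeOf t
decreasing_by
  have h := List.sizeOf_lt_of_mem p.2
  obtain ⟨⟨pa, pt⟩, hp⟩ := p
  simp at h ⊢
  omega

/-- Graft the tree `S` onto the point of `T` (identifying the point of `T`
with the root of `S`); the marks of `S` determine the new point. -/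
def graft (S : PreTree α) : PreTree α → PreTree α
  | node b cs =>
      if b then node S.mark (cs ++ S.children)
      else node b (cs.attach.map fun p => (p.1.1, graft S p.1.2))
termination_by t => sizeOf t
decreasing_by
  have h := List.sizeOf_lt_of_mem p.2
  obtain ⟨⟨pa, pt⟩, hp⟩ := p
  simp at h ⊢
  omega

/-- Move the point of `T` to its root. -/
def pointAtRoot (T : PreTree α) : PreTree α := node true (unmark T).children

/-- Pointed tree concatenation `T ∘ S`. -/
noncomputable def concat (T S : PreTree α) : PreTree α := reduce (graft S T)

/-- The domain operation `D(T)` on pointed trees. -/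
noncomputable def domTree (T : PreTree α) : PreTree α := reduce (pointAtRoot T)

/-- The trivial pointed tree: one vertex, both root and point. -/
def trivialTree : PreTree α := node true []

/-- The two-vertex pointed tree with a single `a`-labelled edge, point at the child. -/
def arrow (a : α) : PreTree α := node false [(a, node true [])]


/-- Set-theoretic equality of trees (children lists regarded as sets). -/
def eqv : PreTree α → PreTree α → Prop
  | node b₁ c₁, node b₂ c₂ =>
      b₁ = b₂ ∧
      (∀ p, p ∈ c₁ → ∃ q, q ∈ c₂ ∧ p.1 = q.1 ∧ eqv p.2 q.2) ∧
      (∀ q, q ∈ c₂ → ∃ p : {x // x ∈ c₁}, p.1.1 = q.1 ∧ eqv p.1.2 q.2)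
termination_by t₁ _ => sizeOf t₁
decreasing_by
  · have h₁ := List.sizeOf_lt_of_mem ‹p ∈ c₁›
    obtain ⟨pa, pt⟩ := p
    simp at h₁ ⊢
    omega
  · have h₁ := List.sizeOf_lt_of_mem p.2
    obtain ⟨⟨pa, pt⟩, hp⟩ := p
    simp at h₁ ⊢
    omega


/-- The subtree of `T` at position `p` (a list of child indices), if it exists. -/
def subAt : List ℕ → PreTree α → Option (PreTree α)
  | [], t => some t
  | i :: is, node _ cs => (cs[i]?).bind fun p => subAt is p.2

/-- `p` is a vertex of `T`. -/
def IsVertex (T : PreTree α) (p : List ℕ) : Prop := ∃ t, subAt p T = some t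

/-- The vertex `p` of `T` is the point (is marked). -/
def IsPoint (T : PreTree α) (p : List ℕ) : Prop :=
  ∃ t, subAt p T = some t ∧ t.mark = true

/-- There is an `a`-labelled edge of `T` from vertex `p` (the parent) to
vertex `q` (the child). -/
def Edge (T : PreTree α) (a : α) (p q : List ℕ) : Prop :=
  ∃ c, subAt p T = some c ∧ ∃ i t, c.children[i]? = some (a, t) ∧ q = p ++ [i]

theorem root_isVertex (T : PreTree α) : IsVertex T [] := ⟨T, rfl⟩

/-- A homomorphism of pointed labelled rooted trees from `S` to `T`:
a map of vertices preserving the labelled edge relations, sending the root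
to the root and points to points. -/
def HomTree (S T : PreTree α) : Prop :=
  ∃ θ : List ℕ → List ℕ,
    θ [] = [] ∧
    (∀ p, IsVertex S p → IsVertex T (θ p)) ∧
    (∀ a p q, Edge S a p q → Edge T a (θ p) (θ q)) ∧
    (∀ p, IsPoint S p → IsPoint T (θ p))

/-- A homomorphism of the pointed tree `T`, viewed as a relational structure,
into the relational structure `(X, f)`, mapping the root of `T` to `x` and
the point of `T` to `y`. -/
def HomInto {X : Type} (T : PreTree α) (f : α → X → X → Prop) (x y : X) : Prop :=
  ∃ θ : List ℕ → X,
    θ [] = x ∧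
    (∀ a p q, Edge T a p q → f a (θ p) (θ q)) ∧
    (∀ p, IsPoint T p → θ p = y)


end PreTree

namespace FreeKAD

/-- Terms of the signature `{∘, 1, D}`. -/
inductive Term1 (α : Type) : Type
  | var : α → Term1 α
  | one : Term1 α
  | comp : Term1 α → Term1 α → Term1 α
  | dom : Term1 α → Term1 α

/-- Terms of the signature `{∘, +, *, 0, 1, D}` (Kleene algebra with domain). -/
inductive TermK (α : Type) : Type
  | var : α → TermK α
  | zero : TermK α
  | one : TermK α
  | comp : TermK α → TermK α → TermK α
  | add : TermK α → TermK α → TermK α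
  | star : TermK α → TermK α
  | dom : TermK α → TermK α

variable {α : Type}

/-- The relational interpretation of a `{∘, 1, D}`-term over a set `X`,
under an assignment `f` of binary relations on `X` to the variables. -/
def rinterp1 {X : Type} (f : α → X → X → Prop) : Term1 α → X → X → Prop
  | .var a => f a
  | .one => fun x y => x = y
  | .comp s t => fun x y => ∃ z, rinterp1 f s x z ∧ rinterp1 f t z y
  | .dom s => fun x y => x = y ∧ ∃ z, rinterp1 f s x z

/-- The relational interpretation of a `{∘, +, *, 0, 1, D}`-term over a set `X`,
under an assignment `f` of binary relations on `X` to the variables. -/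
def rinterpK {X : Type} (f : α → X → X → Prop) : TermK α → X → X → Prop
  | .var a => f a
  | .zero => fun _ _ => False
  | .one => fun x y => x = y
  | .comp s t => fun x y => ∃ z, rinterpK f s x z ∧ rinterpK f t z y
  | .add s t => fun x y => rinterpK f s x y ∨ rinterpK f t x y
  | .star s => Relation.ReflTransGen (rinterpK f s)
  | .dom s => fun x y => x = y ∧ ∃ z, rinterpK f s x z

/-- Composition of binary relations. -/
def relComp {X : Type} (R S : X → X → Prop) : X → X → Prop :=
  fun x y => ∃ z, R x z ∧ S z y

/-- Union of binary relations. -/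
def relUnion {X : Type} (R S : X → X → Prop) : X → X → Prop :=
  fun x y => R x y ∨ S x y

/-- The domain operation on binary relations. -/
def relDom {X : Type} (R : X → X → Prop) : X → X → Prop :=
  fun x y => x = y ∧ ∃ z, R x z

/-- The identity relation. -/
def relId {X : Type} : X → X → Prop := fun x y => x = y

/-- The empty relation. -/
def relEmpty {X : Type} : X → X → Prop := fun _ _ => False

end FreeKAD

namespace FreeKAD

open PreTree

variable {α : Type}

/-- The single-tree interpretation of `{∘, 1, D}`-terms. -/
noncomputable def interp1 : Term1 α → PreTree α
  | .var a => arrow a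
  | .one => trivialTree
  | .comp s t => concat (interp1 s) (interp1 t)
  | .dom s => domTree (interp1 s)

/-- The set of `≤`-maximal elements of a set of trees. -/
def maximalSet (K : Set (PreTree α)) : Set (PreTree α) :=
  {T | T ∈ K ∧ ∀ S ∈ K, le T S → le S T}

/-- Elementwise lifting of pointed tree concatenation to sets of trees. -/
def liftComp (K L : Set (PreTree α)) : Set (PreTree α) :=
  {U | ∃ T ∈ K, ∃ S ∈ L, U = concat T S}

/-- Elementwise lifting of the domain operation to sets of trees. -/
def liftDom (K : Set (PreTree α)) : Set (PreTree α) :=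
  {U | ∃ T ∈ K, U = domTree T}

/-- Iterated lifted concatenation: `K^0 = {trivial}`, `K^(i+1) = K^i ∘ K`. -/
def powC (K : Set (PreTree α)) : ℕ → Set (PreTree α)
  | 0 => {trivialTree}
  | i + 1 => liftComp (powC K i) K

/-- The standard tree interpretation of `{∘, +, *, 0, 1, D}`-terms. -/
def sinterp : TermK α → Set (PreTree α)
  | .var a => {arrow a}
  | .zero => ∅
  | .one => {trivialTree}
  | .comp s t => maximalSet (liftComp (sinterp s) (sinterp t))
  | .add s t => maximalSet (sinterp s ∪ sinterp t)
  | .star s => maximalSet (⋃ i : ℕ, powC (sinterp s) (i + 1))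
  | .dom s => maximalSet (liftDom (sinterp s))

/-- Equality of sets of trees, with trees compared as (hereditarily finite) sets. -/
def SetEqv (K L : Set (PreTree α)) : Prop :=
  (∀ T ∈ K, ∃ S ∈ L, eqv T S) ∧ (∀ S ∈ L, ∃ T ∈ K, eqv T S)

/-- A set of reduced pointed trees is regular if it is the standard tree
interpretation of some `{∘, +, *, 0, 1, D}`-term. -/
def Regular (L : Set (PreTree α)) : Prop := ∃ t : TermK α, L = sinterp t

/-- The set of reduced trees lying `≤`-below some member of `L`. -/
def down (L : Set (PreTree α)) : Set (PreTree α) :=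
  {T | Reduced T ∧ ∃ S ∈ L, le T S}

end FreeKAD

/-!
A tree `T` defines on every structure `(X, f)` the relation `T.toRel f`: the pairs `(x, y)` such
that some homomorphism of `T` into `(X, f)` sends the root to `x` and the point to `y`. Reduction
does not change these homomorphisms, and on pointed trees grafting and moving the point to the
root become composition and domain of relations, so `rinterp1 f u = (interp1 u).toRel f`.
Now take for `X` the trees themselves, with the child relation as edges. The identity of a pointed
tree `T` puts `(T, point of T)` into `T.toRel`, and a homomorphism of `T'` into `T` sending the
point to a marked subtree is exactly `T ≤ T'`. Hence equal relational interpretations give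
`⟨s⟩ ≤ ⟨t⟩ ≤ ⟨s⟩`, and reduced trees that are `≤` each other are equal.
-/

theorem List.exists_eq_one_of_sum_map_eq_one {β : Type} {g : β → ℕ} {l : List β}
    (h : (l.map g).sum = 1) : ∃ a ∈ l, g a = 1 ∧ ∀ b ∈ l, g b = 0 ∨ b = a := by
  induction l with
  | nil => simp at h
  | cons a t ih =>
    rw [List.map_cons, List.sum_cons] at h
    obtain ha | ha : g a = 0 ∨ g a = 1 := by omega
    · obtain ⟨c, hc, hgc, hrest⟩ := ih (by omega)
      refine ⟨c, List.mem_cons_of_mem a hc, hgc, fun b hb => ?_⟩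
      rcases List.mem_cons.1 hb with rfl | hb
      exacts [Or.inl ha, hrest b hb]
    · have ht : ∀ b ∈ t, g b = 0 := List.forall_mem_map.1 (List.sum_eq_zero_iff.1 (by omega))
      refine ⟨a, List.mem_cons_self, ha, fun b hb => ?_⟩
      rcases List.mem_cons.1 hb with rfl | hb
      exacts [Or.inr rfl, Or.inl (ht b hb)]

namespace PreTree

variable {α : Type}

@[induction_eliminator]
theorem ind {motive : PreTree α → Prop}
    (node : ∀ b cs, (∀ p ∈ cs, motive (Prod.snd p)) → motive (node b cs)) (T : PreTree α) :
    motive T :=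
  PreTree.rec (motive_1 := motive) (motive_2 := fun cs => ∀ p ∈ cs, motive p.2)
    (motive_3 := fun p => motive p.2) node (fun _ h => nomatch h)
    (fun _ _ hp hcs _ h => (List.mem_cons.1 h).elim (· ▸ hp) (hcs _)) (fun _ _ h => h) T

instance : LE (PreTree α) := ⟨le⟩

theorem le_node {b₁ b₂ : Bool} {c₁ c₂ : List (α × PreTree α)} :
    node b₁ c₁ ≤ node b₂ c₂ ↔
      (b₂ = true → b₁ = true) ∧ ∀ q ∈ c₂, ∃ p ∈ c₁, p.1 = q.1 ∧ p.2 ≤ q.2 := by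
  show le _ _ ↔ _
  rw [le]
  rfl

protected theorem le_refl (T : PreTree α) : T ≤ T := by
  induction T with
  | node b cs ih => exact le_node.2 ⟨id, fun q hq => ⟨q, hq, rfl, ih q hq⟩⟩

protected theorem le_trans {A B C : PreTree α} (hAB : A ≤ B) (hBC : B ≤ C) : A ≤ C := by
  induction C generalizing A B with
  | node c cc ih =>
    obtain ⟨a, ca⟩ := A
    obtain ⟨b, cb⟩ := B
    rw [le_node] at hAB hBC ⊢
    refine ⟨hAB.1 ∘ hBC.1, fun q hq => ?_⟩
    obtain ⟨p, hp, hpq, hle⟩ := hBC.2 q hq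
    obtain ⟨r, hr, hrp, hle'⟩ := hAB.2 p hp
    exact ⟨r, hr, hrp.trans hpq, ih q hq hle' hle⟩

instance : Preorder (PreTree α) where
  le_refl := PreTree.le_refl
  le_trans _ _ _ := PreTree.le_trans

theorem markCount_node (b : Bool) (cs : List (α × PreTree α)) :
    markCount (node b cs) = cond b 1 0 + (cs.map fun p => markCount p.2).sum := by
  rw [markCount, List.attach_map_val (l := cs) (f := fun p => markCount p.2)]

theorem markCount_node_eq_zero {b : Bool} {cs : List (α × PreTree α)} :
    markCount (node b cs) = 0 ↔ b = false ∧ ∀ p ∈ cs, markCount p.2 = 0 := by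
  cases b
  · simp only [markCount_node, cond_false, zero_add, List.sum_eq_zero_iff, List.forall_mem_map,
      true_and]
  · simp [markCount_node]

theorem unmark_node (b : Bool) (cs : List (α × PreTree α)) :
    unmark (node b cs) = node false (cs.map fun p => (p.1, unmark p.2)) := by
  rw [unmark, List.attach_map_val (l := cs) (f := fun p => (p.1, unmark p.2))]

theorem graft_node (S : PreTree α) (b : Bool) (cs : List (α × PreTree α)) :
    graft S (node b cs) =
      if b then node S.mark (cs ++ S.children)
      else node b (cs.map fun p => (p.1, graft S p.2)) := by
  rw [graft, List.attach_map_val (l := cs) (f := fun p => (p.1, graft S p.2))]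

open scoped Classical in
theorem reduce_node (b : Bool) (cs : List (α × PreTree α)) :
    reduce (node b cs) =
      node b ((cs.map fun p => (p.1, reduce p.2)).filter fun q =>
        decide (∀ q' ∈ cs.map (fun p => (p.1, reduce p.2)),
          q'.1 = q.1 → q'.2 ≤ q.2 → q.2 ≤ q'.2)) := by
  rw [reduce, List.attach_map_val (l := cs) (f := fun p => (p.1, reduce p.2))]
  rfl

theorem eqv_node {b₁ b₂ : Bool} {c₁ c₂ : List (α × PreTree α)} :
    eqv (node b₁ c₁) (node b₂ c₂) ↔
      b₁ = b₂ ∧ (∀ p ∈ c₁, ∃ q ∈ c₂, p.1 = q.1 ∧ eqv p.2 q.2) ∧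
      (∀ q ∈ c₂, ∃ p : {x // x ∈ c₁}, p.1.1 = q.1 ∧ eqv p.1.2 q.2) := by
  rw [eqv]

section Hom

variable {X : Type} (f : α → X → X → Prop)

/-- `T.Hom f x P`: some homomorphism of `T` into `(X, f)` sends the root to `x` and every marked
vertex into `P`. -/
def Hom : PreTree α → X → (X → Prop) → Prop
  | node b cs, x, P => (b = true → P x) ∧ ∀ p ∈ cs, ∃ z, f p.1 x z ∧ Hom p.2 z P
termination_by T => sizeOf T
decreasing_by
  have := List.sizeOf_lt_of_mem ‹p ∈ cs›
  obtain ⟨a, T⟩ := p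
  simp only [PreTree.node.sizeOf_spec, Prod.mk.sizeOf_spec] at this ⊢
  omega

def toRel (T : PreTree α) : X → X → Prop := fun x y => T.Hom f x (· = y)

variable {f}

theorem hom_node {b : Bool} {cs : List (α × PreTree α)} {x : X} {P : X → Prop} :
    (node b cs).Hom f x P ↔ (b = true → P x) ∧ ∀ p ∈ cs, ∃ z, f p.1 x z ∧ p.2.Hom f z P := by
  rw [Hom]

theorem Hom.mono {T : PreTree α} {x : X} {P Q : X → Prop} (hPQ : ∀ z, P z → Q z)
    (h : T.Hom f x P) : T.Hom f x Q := by
  induction T generalizing x with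
  | node b cs ih =>
    rw [hom_node] at h ⊢
    refine ⟨fun hb => hPQ x (h.1 hb), fun p hp => ?_⟩
    obtain ⟨z, hz, hpz⟩ := h.2 p hp
    exact ⟨z, hz, ih p hp hpz⟩

theorem Hom.of_le {A B : PreTree α} {x : X} {P : X → Prop} (hAB : A ≤ B) (h : A.Hom f x P) :
    B.Hom f x P := by
  induction B generalizing A x with
  | node b cb ih =>
    obtain ⟨a, ca⟩ := A
    rw [le_node] at hAB
    rw [hom_node] at h ⊢
    refine ⟨h.1 ∘ hAB.1, fun q hq => ?_⟩
    obtain ⟨p, hp, hpq₁, hpq₂⟩ := hAB.2 q hq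
    obtain ⟨z, hz, hpz⟩ := h.2 p hp
    exact ⟨z, hpq₁ ▸ hz, ih q hq hpq₂ hpz⟩

theorem hom_congr_of_markCount_eq_zero {T : PreTree α} (hT : markCount T = 0) {x : X}
    {P Q : X → Prop} : T.Hom f x P ↔ T.Hom f x Q := by
  induction T generalizing x with
  | node b cs ih =>
    obtain ⟨rfl, hcs⟩ := markCount_node_eq_zero.1 hT
    simp only [hom_node, Bool.false_eq_true, false_implies, true_and]
    exact forall₂_congr fun p hp => exists_congr fun z => and_congr_right' (ih p hp (hcs p hp))

end Hom

theorem node_mark_children (T : PreTree α) : node T.mark T.children = T := by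
  cases T; rfl

theorem mark_reduce (T : PreTree α) : (reduce T).mark = T.mark := by
  cases T; rw [reduce_node]; rfl

theorem exists_mem_children_reduce_le {b : Bool} {cs : List (α × PreTree α)}
    {p : α × PreTree α} (hp : p ∈ cs) :
    ∃ q ∈ (reduce (node b cs)).children, q.1 = p.1 ∧ q.2 ≤ reduce p.2 := by
  classical
  set cs' := cs.map fun p => (p.1, reduce p.2)
  have hfin : {T | (p.1, T) ∈ cs'}.Finite :=
    (List.finite_toSet cs').preimage (Prod.mk_right_injective p.1).injOn
  obtain ⟨m, hm, hmin⟩ := hfin.isPWO.exists_le_minimal (a := reduce p.2)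
    (List.mem_map_of_mem (f := fun p : α × PreTree α => (p.1, reduce p.2)) hp)
  refine ⟨(p.1, m), ?_, rfl, hm⟩
  rw [reduce_node]
  refine List.mem_filter.2 ⟨hmin.1, decide_eq_true fun q hq hqm hle => ?_⟩
  obtain ⟨a, T⟩ := q
  obtain rfl : a = p.1 := hqm
  exact hmin.2 hq hle

theorem reduce_le (T : PreTree α) : reduce T ≤ T := by
  induction T with
  | node b cs ih =>
    rw [← node_mark_children (reduce _), mark_reduce, le_node]
    refine ⟨id, fun p hp => ?_⟩
    obtain ⟨q, hq, hqp, hle⟩ := exists_mem_children_reduce_le (b := b) hp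
    exact ⟨q, hq, hqp, hle.trans (ih p hp)⟩

theorem le_reduce (T : PreTree α) : T ≤ reduce T := by
  induction T with
  | node b cs ih =>
    rw [reduce_node, le_node]
    refine ⟨id, fun q hq => ?_⟩
    obtain ⟨p, hp, rfl⟩ := List.mem_map.1 (List.mem_filter.1 hq).1
    exact ⟨p, hp, rfl, ih p hp⟩

theorem hom_reduce {X : Type} {f : α → X → X → Prop} {T : PreTree α} {x : X} {P : X → Prop} :
    (reduce T).Hom f x P ↔ T.Hom f x P :=
  ⟨Hom.of_le (reduce_le T), Hom.of_le (le_reduce T)⟩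

theorem reduced_node {b : Bool} {cs : List (α × PreTree α)} (hcs : ∀ p ∈ cs, Reduced p.2)
    (hmin : ∀ p ∈ cs, ∀ q ∈ cs, q.1 = p.1 → q.2 ≤ p.2 → p.2 ≤ q.2) :
    Reduced (node b cs) := by
  classical
  have hmap : (cs.map fun p => (p.1, reduce p.2)) = cs :=
    (List.map_congr_left fun p hp => by rw [hcs p hp]).trans (List.map_id' cs)
  rw [Reduced, reduce_node, hmap, List.filter_eq_self.2]
  exact fun p hp => decide_eq_true fun q hq => hmin p hp q hq

theorem reduced_reduce (T : PreTree α) : Reduced (reduce T) := by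
  classical
  induction T with
  | node b cs ih =>
    rw [reduce_node]
    refine reduced_node (fun q hq => ?_) fun q hq q' hq' => ?_
    · obtain ⟨p, hp, rfl⟩ := List.mem_map.1 (List.mem_filter.1 hq).1
      exact ih p hp
    · exact of_decide_eq_true (List.mem_filter.1 hq).2 q' (List.mem_filter.1 hq').1

theorem Reduced.of_node {b : Bool} {cs : List (α × PreTree α)} (h : Reduced (node b cs)) :
    (∀ p ∈ cs, Reduced p.2) ∧ ∀ p ∈ cs, ∀ q ∈ cs, q.1 = p.1 → q.2 ≤ p.2 → p.2 ≤ q.2 := by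
  classical
  have hcs := h
  rw [Reduced, reduce_node, node.injEq] at hcs
  have hmem : ∀ p ∈ cs, _ := fun p hp => List.mem_filter.1 (hcs.2.symm ▸ hp)
  refine ⟨fun p hp => ?_, fun p hp q hq => of_decide_eq_true (hmem p hp).2 q (hmem q hq).1⟩
  obtain ⟨c, -, hc⟩ := List.mem_map.1 (hmem p hp).1
  rw [← hc]
  exact reduced_reduce c.2

theorem eqv_of_le_of_le {A B : PreTree α} (hA : Reduced A) (hB : Reduced B) (hAB : A ≤ B)
    (hBA : B ≤ A) : eqv A B := by
  induction A generalizing B with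
  | node a ca ih =>
    obtain ⟨b, cb⟩ := B
    obtain ⟨hcaR, hcaMin⟩ := hA.of_node
    obtain ⟨hcbR, hcbMin⟩ := hB.of_node
    rw [le_node] at hAB hBA
    refine eqv_node.2 ⟨(Bool.eq_iff_iff.2 ⟨hBA.1, hAB.1⟩), fun p hp => ?_, fun q hq => ?_⟩
    · obtain ⟨q, hq, hqp, hqp'⟩ := hBA.2 p hp
      obtain ⟨p', hp', hp'q, hp'q'⟩ := hAB.2 q hq
      have hpq : p.2 ≤ q.2 :=
        (hcaMin p hp p' hp' (hp'q.trans hqp) (hp'q'.trans hqp')).trans hp'q'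
      exact ⟨q, hq, hqp.symm, ih p hp (hcaR p hp) (hcbR q hq) hpq hqp'⟩
    · obtain ⟨p, hp, hpq, hpq'⟩ := hAB.2 q hq
      obtain ⟨q', hq', hq'p, hq'p'⟩ := hBA.2 p hp
      have hqp : q.2 ≤ p.2 :=
        (hcbMin q hq q' hq' (hq'p.trans hpq) (hq'p'.trans hpq')).trans hq'p'
      exact ⟨⟨p, hp⟩, hpq, ih p hp (hcaR p hp) (hcbR q hq) hpq' hqp⟩

section Marks

variable {X : Type} {f : α → X → X → Prop}

theorem markCount_le_sum_of_mem {cs : List (α × PreTree α)} {p : α × PreTree α} (hp : p ∈ cs) :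
    markCount p.2 ≤ (cs.map fun p => markCount p.2).sum :=
  List.le_sum_of_mem (List.mem_map_of_mem (f := fun p => markCount p.2) hp)

theorem Pointed.node_cases {b : Bool} {cs : List (α × PreTree α)} (h : Pointed (node b cs)) :
    (b = true ∧ ∀ p ∈ cs, markCount p.2 = 0) ∨
      (b = false ∧ ∃ p₀ ∈ cs, Pointed p₀.2 ∧ ∀ p ∈ cs, markCount p.2 = 0 ∨ p = p₀) := by
  cases b
  · rw [Pointed, markCount_node, cond_false, zero_add] at h
    exact Or.inr ⟨rfl, List.exists_eq_one_of_sum_map_eq_one h⟩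
  · rw [Pointed, markCount_node, cond_true] at h
    exact Or.inl ⟨rfl, fun p hp => by have := markCount_le_sum_of_mem hp; omega⟩

theorem hom_iff_exists_toRel {T : PreTree α} (hT : Pointed T) {x : X} {P : X → Prop} :
    T.Hom f x P ↔ ∃ y, P y ∧ T.toRel f x y := by
  refine ⟨fun h => ?_, fun ⟨y, hy, h⟩ => Hom.mono (fun z (hz : z = y) => hz ▸ hy) h⟩
  induction T generalizing x with
  | node b cs ih =>
    rw [hom_node] at h
    rcases hT.node_cases with ⟨rfl, hcs⟩ | ⟨rfl, p₀, hp₀, hpt, hcs⟩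
    · refine ⟨x, h.1 rfl, hom_node.2 ⟨fun _ => rfl, fun p hp => ?_⟩⟩
      obtain ⟨z, hz, hpz⟩ := h.2 p hp
      exact ⟨z, hz, (hom_congr_of_markCount_eq_zero (hcs p hp)).1 hpz⟩
    · -- the point lies below `p₀`; the markless siblings do not care where it is sent
      obtain ⟨z₀, hz₀, hp₀z⟩ := h.2 p₀ hp₀
      obtain ⟨y, hy, hp₀y⟩ := ih p₀ hp₀ hpt hp₀z
      refine ⟨y, hy, hom_node.2 ⟨nofun, fun p hp => ?_⟩⟩
      rcases hcs p hp with h0 | rfl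
      · obtain ⟨z, hz, hpz⟩ := h.2 p hp
        exact ⟨z, hz, (hom_congr_of_markCount_eq_zero h0).1 hpz⟩
      · exact ⟨z₀, hz₀, hp₀y⟩

theorem markCount_reduce_le (T : PreTree α) : markCount (reduce T) ≤ markCount T := by
  classical
  induction T with
  | node b cs ih =>
    rw [reduce_node, markCount_node, markCount_node]
    refine Nat.add_le_add_left ?_ _
    calc _ ≤ ((cs.map fun p => (p.1, reduce p.2)).map fun p => markCount p.2).sum :=
          (List.filter_sublist.map _).sum_le_sum fun _ _ => Nat.zero_le _
      _ ≤ (cs.map fun p => markCount p.2).sum := by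
          rw [List.map_map]
          exact List.sum_le_sum ih

theorem markCount_eq_zero_of_le {A B : PreTree α} (hAB : A ≤ B) (hA : markCount A = 0) :
    markCount B = 0 := by
  induction B generalizing A with
  | node b cb ih =>
    obtain ⟨a, ca⟩ := A
    rw [le_node] at hAB
    rw [markCount_node_eq_zero] at hA ⊢
    refine ⟨Bool.eq_false_iff.2 fun hb => by simpa [hA.1] using hAB.1 hb, fun q hq => ?_⟩
    obtain ⟨p, hp, -, hpq⟩ := hAB.2 q hq
    exact ih q hq hpq (hA.2 p hp)

theorem pointed_reduce {T : PreTree α} (hT : Pointed T) : Pointed (reduce T) := by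
  have hle := markCount_reduce_le T
  have hne : markCount (reduce T) ≠ 0 := fun h => by
    have := markCount_eq_zero_of_le (reduce_le T) h
    rw [Pointed] at hT
    omega
  rw [Pointed] at hT ⊢
  omega

theorem markCount_graft (S : PreTree α) {T : PreTree α} (hT : markCount T ≤ 1) :
    markCount (graft S T) = markCount S * markCount T := by
  induction T with
  | node b cs ih =>
    rw [graft_node]
    cases b
    · rw [if_neg Bool.false_ne_true, markCount_node, markCount_node, cond_false, zero_add,
        zero_add, List.map_map, ← List.sum_map_mul_left]
      rw [markCount_node, cond_false, zero_add] at hT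
      exact congrArg List.sum <| List.map_congr_left fun p hp =>
        ih p hp ((markCount_le_sum_of_mem hp).trans hT)
    · rw [markCount_node, cond_true] at hT
      rw [if_pos rfl, markCount_node, markCount_node, List.map_append, List.sum_append,
        cond_true, show (cs.map fun p => markCount p.2).sum = 0 by omega, zero_add, add_zero,
        mul_one, ← markCount_node, node_mark_children]

-- `graft` stops at the first mark on each branch, so a mark below a mark would escape it.
theorem hom_graft {S T : PreTree α} (hT : markCount T ≤ 1) {x : X} {P : X → Prop} :
    (graft S T).Hom f x P ↔ T.Hom f x fun z => S.Hom f z P := by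
  induction T generalizing x with
  | node b cs ih =>
    rw [graft_node]
    cases b
    · rw [markCount_node, cond_false, zero_add] at hT
      simp only [Bool.false_eq_true, if_false, hom_node, false_implies, true_and,
        List.forall_mem_map]
      exact forall₂_congr fun p hp => exists_congr fun z =>
        and_congr_right' (ih p hp ((markCount_le_sum_of_mem hp).trans hT))
    · rw [markCount_node, cond_true] at hT
      obtain ⟨sb, scs⟩ := S
      rw [if_pos rfl, hom_node, hom_node (b := true), hom_node (x := x) (b := sb),
        List.forall_mem_append]
      have hcs : (∀ p ∈ cs, ∃ z, f p.1 x z ∧ p.2.Hom f z P) ↔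
          ∀ p ∈ cs, ∃ z, f p.1 x z ∧ p.2.Hom f z fun z => (node sb scs).Hom f z P :=
        forall₂_congr fun p hp => exists_congr fun z => and_congr_right' <|
          hom_congr_of_markCount_eq_zero (by have := markCount_le_sum_of_mem hp; omega)
      rw [hcs]
      simp only [mark, children, true_implies]
      tauto

theorem hom_unmark {T : PreTree α} {x : X} {P : X → Prop} :
    (unmark T).Hom f x P ↔ T.Hom f x fun _ => True := by
  induction T generalizing x with
  | node b cs ih =>
    simp only [unmark_node, hom_node, Bool.false_eq_true, false_implies, true_and,
      implies_true, List.forall_mem_map]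
    exact forall₂_congr fun p hp => exists_congr fun z => and_congr_right' (ih p hp)

theorem hom_pointAtRoot {T : PreTree α} {x : X} {P : X → Prop} :
    (pointAtRoot T).Hom f x P ↔ P x ∧ T.Hom f x fun _ => True := by
  rw [← hom_unmark (P := P)]
  obtain ⟨b, cs⟩ := T
  simp only [pointAtRoot, unmark_node, children, hom_node, true_implies, Bool.false_eq_true,
    false_implies, true_and]

theorem markCount_unmark (T : PreTree α) : markCount (unmark T) = 0 := by
  induction T with
  | node b cs ih =>
    rw [unmark_node, markCount_node_eq_zero]
    exact ⟨rfl, List.forall_mem_map.2 ih⟩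

theorem pointed_pointAtRoot (T : PreTree α) : Pointed (pointAtRoot T) := by
  have h := markCount_unmark T
  rw [← node_mark_children (unmark T), markCount_node] at h
  rw [Pointed, pointAtRoot, markCount_node, cond_true]
  cases (unmark T).mark <;> simp_all

end Marks

section Relations

open FreeKAD (relComp relDom relId)

variable {X : Type} {f : α → X → X → Prop}

theorem toRel_arrow (a : α) : (arrow a).toRel f = f a := by
  ext x y
  simp [toRel, arrow, hom_node]

theorem toRel_trivialTree : (trivialTree : PreTree α).toRel f = relId := by
  ext x y
  simp [toRel, trivialTree, hom_node, relId]

theorem toRel_concat {T : PreTree α} (hT : Pointed T) (S : PreTree α) :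
    (concat T S).toRel f = relComp (T.toRel f) (S.toRel f) := by
  ext x y
  rw [toRel, concat, hom_reduce, hom_graft hT.le, hom_iff_exists_toRel hT]
  exact exists_congr fun z => and_comm

theorem toRel_domTree {T : PreTree α} (hT : Pointed T) :
    (domTree T).toRel f = relDom (T.toRel f) := by
  ext x y
  rw [toRel, domTree, hom_reduce, hom_pointAtRoot, hom_iff_exists_toRel hT]
  simp only [true_and]
  rfl

theorem pointed_arrow (a : α) : Pointed (arrow a) := by
  simp [Pointed, arrow, markCount_node]

theorem pointed_trivialTree : Pointed (trivialTree : PreTree α) := by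
  simp [Pointed, trivialTree, markCount_node]

theorem pointed_concat {T S : PreTree α} (hT : Pointed T) (hS : Pointed S) :
    Pointed (concat T S) := by
  refine pointed_reduce ?_
  rw [Pointed, markCount_graft S hT.le, hS, hT]

theorem pointed_domTree (T : PreTree α) : Pointed (domTree T) :=
  pointed_reduce (pointed_pointAtRoot T)

theorem reduced_trivialTree : Reduced (trivialTree : PreTree α) :=
  reduced_node (by simp) (by simp)

theorem reduced_arrow (a : α) : Reduced (arrow a) :=
  reduced_node (fun p hp => List.mem_singleton.1 hp ▸ reduced_trivialTree) (by simp)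

def childRel : α → PreTree α → PreTree α → Prop := fun a U V => (a, V) ∈ U.children

theorem le_iff_hom_childRel {A B : PreTree α} : A ≤ B ↔ B.Hom childRel A (·.mark = true) := by
  induction B generalizing A with
  | node b cb ih =>
    obtain ⟨a, ca⟩ := A
    rw [le_node, hom_node]
    refine and_congr Iff.rfl (forall₂_congr fun q hq => ⟨?_, ?_⟩)
    · rintro ⟨⟨c, U⟩, hU, rfl, hle⟩
      exact ⟨U, hU, ih q hq |>.1 hle⟩
    · rintro ⟨U, hU, h⟩
      exact ⟨(q.1, U), hU, rfl, ih q hq |>.2 h⟩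

theorem le_of_toRel_le {T T' : PreTree α} (hT : Pointed T)
    (h : ∀ (X : Type) (f : α → X → X → Prop), T.toRel f ≤ T'.toRel f) : T ≤ T' := by
  obtain ⟨y, hy, hTy⟩ := (hom_iff_exists_toRel hT).1 (le_iff_hom_childRel.1 le_rfl)
  exact le_iff_hom_childRel.2 (Hom.mono (fun z (hz : z = y) => hz ▸ hy) (h _ childRel T y hTy))

end Relations

end PreTree

namespace FreeKAD

open PreTree

variable {α : Type}

theorem pointed_interp1 : ∀ u : Term1 α, Pointed (interp1 u)
  | .var a => pointed_arrow a
  | .one => pointed_trivialTree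
  | .comp s t => pointed_concat (pointed_interp1 s) (pointed_interp1 t)
  | .dom s => pointed_domTree (interp1 s)

theorem reduced_interp1 : ∀ u : Term1 α, Reduced (interp1 u)
  | .var a => reduced_arrow a
  | .one => reduced_trivialTree
  | .comp _ _ => reduced_reduce _
  | .dom _ => reduced_reduce _

theorem rinterp1_eq_toRel {X : Type} (f : α → X → X → Prop) :
    ∀ u : Term1 α, rinterp1 f u = (interp1 u).toRel f
  | .var a => (toRel_arrow a).symm
  | .one => toRel_trivialTree.symm
  | .comp s t => by
    show relComp (rinterp1 f s) (rinterp1 f t) = _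
    rw [rinterp1_eq_toRel f s, rinterp1_eq_toRel f t, interp1, toRel_concat (pointed_interp1 s)]
  | .dom s => by
    show relDom (rinterp1 f s) = _
    rw [rinterp1_eq_toRel f s, interp1, toRel_domTree (pointed_interp1 s)]

theorem interp1_le_of_rinterp1_le {s t : Term1 α}
    (h : ∀ (X : Type) (f : α → X → X → Prop), rinterp1 f s ≤ rinterp1 f t) :
    interp1 s ≤ interp1 t :=
  le_of_toRel_le (pointed_interp1 s) fun X f => by
    simpa only [rinterp1_eq_toRel] using h X f

/-- Completeness with respect to relations for the
signature `{∘, 1, D}`: if for every set `X` and every assignment `f` of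
binary relations on `X` to the variables the relational interpretations of
`s` and `t` under `f` coincide, then `⟨s⟩ = ⟨t⟩` (equality of trees, whose
children collections are sets, is `eqv`). -/
theorem completeness_comp_one_dom {α : Type} (s t : Term1 α)
    (h : ∀ (X : Type) (f : α → X → X → Prop), rinterp1 f s = rinterp1 f t) :
    eqv (interp1 s) (interp1 t) :=
  eqv_of_le_of_le (reduced_interp1 s) (reduced_interp1 t)
    (interp1_le_of_rinterp1_le fun X f => (h X f).le)
    (interp1_le_of_rinterp1_le fun X f => (h X f).ge)

end FreeKAD
end

section
/- A regular subset L of the reduced pointed Σ-labelled rooted trees is finite if and only if L = ⟦t⟧ for some term t in the star-free signature {∘, +, 0, 1, D}; consequently, the finite regular subsets are exactly the standard tree interpretations of {∘, +, 0, 1, D}-terms. -/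
namespace FreeKAD
open PreTree

/-- A `{∘, +, *, 0, 1, D}`-term is star-free if the star operation does not
occur in it, i.e. it is a `{∘, +, 0, 1, D}`-term. -/
def starFree {α : Type} : TermK α → Prop
  | .var _ => True
  | .zero => True
  | .one => True
  | .comp s t => starFree s ∧ starFree t
  | .add s t => starFree s ∧ starFree t
  | .star _ => False
  | .dom s => starFree s

section Aux

variable {α : Type}

lemma maximalSet_of_antichain {K : Set (PreTree α)}
    (h : ∀ T ∈ K, ∀ S ∈ K, le T S → le S T) : maximalSet K = K := by
  ext T
  exact ⟨fun h => h.1, fun hT => ⟨hT, fun S hS => h T hT S hS⟩⟩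

lemma maximalSet_singleton (x : PreTree α) : maximalSet {x} = {x} := by
  apply maximalSet_of_antichain
  intro T hT S hS hle
  simp only [Set.mem_singleton_iff] at hT hS
  subst hT; subst hS; exact hle

lemma liftComp_singleton (A B : PreTree α) :
    liftComp {A} {B} = {concat A B} := by
  ext U; simp [liftComp]

lemma liftDom_singleton (A : PreTree α) :
    liftDom {A} = {domTree A} := by
  ext U; simp [liftDom]

lemma sinterp_antichain (t : TermK α) :
    ∀ T ∈ sinterp t, ∀ S ∈ sinterp t, le T S → le S T := by
  cases t <;> intro T hT S hS hle
  · simp only [sinterp, Set.mem_singleton_iff] at hT hS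
    subst hT; subst hS; exact hle
  · simp [sinterp] at hT
  · simp only [sinterp, Set.mem_singleton_iff] at hT hS
    subst hT; subst hS; exact hle
  · exact hT.2 S hS.1 hle
  · exact hT.2 S hS.1 hle
  · exact hT.2 S hS.1 hle
  · exact hT.2 S hS.1 hle

lemma exists_singleton_term (t : TermK α) :
    ∀ T ∈ sinterp t, ∃ u : TermK α, starFree u ∧ sinterp u = {T} := by
  induction t with
  | var a =>
      intro T hT
      simp only [sinterp, Set.mem_singleton_iff] at hT
      subst hT; exact ⟨.var a, trivial, rfl⟩
  | zero => intro T hT; simp [sinterp] at hT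
  | one =>
      intro T hT
      simp only [sinterp, Set.mem_singleton_iff] at hT
      subst hT; exact ⟨.one, trivial, rfl⟩
  | comp s t ihs iht =>
      intro T hT
      obtain ⟨⟨A, hA, B, hB, rfl⟩, -⟩ := hT
      obtain ⟨uA, hfA, hsA⟩ := ihs A hA
      obtain ⟨uB, hfB, hsB⟩ := iht B hB
      refine ⟨.comp uA uB, ⟨hfA, hfB⟩, ?_⟩
      show maximalSet (liftComp (sinterp uA) (sinterp uB)) = _
      rw [hsA, hsB, liftComp_singleton, maximalSet_singleton]
  | add s t ihs iht =>
      intro T hT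
      rcases hT.1 with h | h
      · exact ihs T h
      · exact iht T h
  | star s ihs =>
      intro T hT
      have hT1 := hT.1
      simp only [Set.mem_iUnion] at hT1
      obtain ⟨i, hi⟩ := hT1
      clear hT
      induction i generalizing T with
      | zero =>
          obtain ⟨A, hA, B, hB, rfl⟩ := hi
          simp only [powC, Set.mem_singleton_iff] at hA
          subst hA
          obtain ⟨uB, hfB, hsB⟩ := ihs B hB
          refine ⟨.comp .one uB, ⟨trivial, hfB⟩, ?_⟩
          show maximalSet (liftComp (sinterp .one) (sinterp uB)) = _
          rw [hsB]
          show maximalSet (liftComp {trivialTree} {B}) = _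
          rw [liftComp_singleton, maximalSet_singleton]
      | succ i ih =>
          obtain ⟨A, hA, B, hB, rfl⟩ := hi
          obtain ⟨uA, hfA, hsA⟩ := ih A hA
          obtain ⟨uB, hfB, hsB⟩ := ihs B hB
          refine ⟨.comp uA uB, ⟨hfA, hfB⟩, ?_⟩
          show maximalSet (liftComp (sinterp uA) (sinterp uB)) = _
          rw [hsA, hsB, liftComp_singleton, maximalSet_singleton]
  | dom s ihs =>
      intro T hT
      obtain ⟨⟨A, hA, rfl⟩, -⟩ := hT
      obtain ⟨uA, hfA, hsA⟩ := ihs A hA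
      refine ⟨.dom uA, hfA, ?_⟩
      show maximalSet (liftDom (sinterp uA)) = _
      rw [hsA, liftDom_singleton, maximalSet_singleton]

lemma sinterp_finite_of_starFree (t : TermK α) (h : starFree t) :
    (sinterp t).Finite := by
  induction t with
  | var a => exact Set.finite_singleton _
  | zero => exact Set.finite_empty
  | one => exact Set.finite_singleton _
  | comp s t ihs iht =>
      obtain ⟨hs, ht⟩ := h
      refine Set.Finite.subset (Set.Finite.image2 concat (ihs hs) (iht ht)) ?_
      intro U hU
      obtain ⟨A, hA, B, hB, rfl⟩ := hU.1
      exact Set.mem_image2_of_mem hA hB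
  | add s t ihs iht =>
      obtain ⟨hs, ht⟩ := h
      exact Set.Finite.subset ((ihs hs).union (iht ht)) (fun T hT => hT.1)
  | star s ihs => exact absurd h (by simp [starFree])
  | dom s ihs =>
      refine Set.Finite.subset (Set.Finite.image domTree (ihs h)) ?_
      intro U hU
      obtain ⟨A, hA, rfl⟩ := hU.1
      exact Set.mem_image_of_mem _ hA

lemma finset_term : ∀ s : Finset (PreTree α),
    (∀ T ∈ s, ∃ u : TermK α, starFree u ∧ sinterp u = {T}) →
    (∀ T ∈ s, ∀ S ∈ s, le T S → le S T) →
    ∃ u : TermK α, starFree u ∧ sinterp u = ↑s := by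
  intro s
  classical
  induction s using Finset.induction_on with
  | empty => exact fun _ _ => ⟨.zero, trivial, by simp [sinterp]⟩
  | @insert T s hTs ih =>
      intro hrep hanti
      obtain ⟨uT, hfT, hsT⟩ := hrep T (Finset.mem_insert_self T s)
      obtain ⟨us, hfs, hss⟩ := ih
        (fun S hS => hrep S (Finset.mem_insert_of_mem hS))
        (fun A hA B hB => hanti A (Finset.mem_insert_of_mem hA) B (Finset.mem_insert_of_mem hB))
      refine ⟨.add uT us, ⟨hfT, hfs⟩, ?_⟩
      show maximalSet (sinterp uT ∪ sinterp us) = _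
      rw [hsT, hss]
      have hcoe : ({T} : Set (PreTree α)) ∪ ↑s = ↑(insert T s) := by
        rw [Finset.coe_insert, Set.insert_eq]
      rw [hcoe, maximalSet_of_antichain]
      intro A hA B hB
      rw [Finset.mem_coe] at hA hB
      exact hanti A hA B hB

end Aux

/-- A regular subset `L` of the reduced pointed
`Σ`-labelled rooted trees is finite if and only if `L = ⟦t⟧` for some term
`t` in the star-free signature `{∘, +, 0, 1, D}`; consequently, the finite
regular subsets are exactly the standard tree interpretations of
`{∘, +, 0, 1, D}`-terms. -/
theorem finite_regular_iff_star_free {α : Type} (L : Set (PreTree α))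
    (hL : Regular L) :
    L.Finite ↔ ∃ t : TermK α, starFree t ∧ L = sinterp t := by
  obtain ⟨t, rfl⟩ := hL
  constructor
  · intro hfin
    obtain ⟨u, hfu, hsu⟩ := finset_term hfin.toFinset
      (fun T hT => exists_singleton_term t T (by rwa [Set.Finite.mem_toFinset] at hT))
      (fun T hT S hS => sinterp_antichain t T (by rwa [Set.Finite.mem_toFinset] at hT)
        S (by rwa [Set.Finite.mem_toFinset] at hS))
    exact ⟨u, hfu, by rw [hsu, Set.Finite.coe_toFinset]⟩
  · rintro ⟨u, hfu, hsu⟩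
    rw [hsu]
    exact sinterp_finite_of_starFree u hfu

end FreeKAD
end
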